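/- The function I(ν) = (1/π) ∫_{-π}^{π} d(φ, ν) sin^2 φ dφ, where d(φ, ν) = -(cos φ + ν/2) - sqrt((cos φ + ν/2)^2 - 1) for ν < -4, is strictly increasing on (-∞, -4), tends to 0 as ν → -∞, and tends to 2(1 - 8/(3π)) as ν → -4⁻. Consequently, for every r with 0 < r < 2(1 - 8/(3π)), the equation I(ν) = r has a unique solution ν < -4. -/

import Mathlib

noncomputable def d (φ ν : ℝ) : ℝ :=
  -(Real.cos φ + ν/2) - Real.sqrt ((Real.cos φ + ν/2)^2 - 1)

noncomputable def I (ν : ℝ) : ℝ :=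
  (1/Real.pi) * ∫ φ in (-Real.pi)..Real.pi, d φ ν * (Real.sin φ)^2

/-!
For `x ≤ -1` the roots `-x ∓ √(x² - 1)` of `y² + 2xy + 1` have product `1`, so the small one is
the reciprocal of the large one, which is `≥ -x ≥ 1` and decreasing in `x`. With
`x = cos φ + ν/2` this makes `d φ ν` positive, strictly increasing in `ν` and at most
`1/(-1 - ν/2)`, hence `I` is strictly increasing and `I ν → 0` as `ν → -∞`.

The formula for `d` is continuous in `ν` everywhere, so the limit at `-4⁻` is `I (-4)`, an
elementary integral: on `[0, π]`, `√((1 - cos φ)(3 - cos φ)) sin² φ` equals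
`sin φ (1 - cos φ) √((1 + cos φ)(3 - cos φ))`, the derivative of
`-⅓ ((1 + cos φ)(3 - cos φ))^{3/2}`. Unique solvability then follows from the intermediate value
theorem.
-/

open Real Filter Set Topology intervalIntegral

theorem StrictMonoOn.existsUnique_eq_of_tendsto {α δ : Type*} [ConditionallyCompleteLinearOrder α]
    [TopologicalSpace α] [OrderTopology α] [DenselyOrdered α] [NoMinOrder α] [LinearOrder δ]
    [TopologicalSpace δ] [OrderClosedTopology δ] {f : α → δ} {a : α} {l u r : δ}
    (hmono : StrictMonoOn f (Iio a)) (hcont : ContinuousOn f (Iio a))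
    (hbot : Tendsto f atBot (𝓝 l)) (htop : Tendsto f (𝓝[<] a) (𝓝 u)) (hl : l < r) (hu : r < u) :
    ∃! x, x < a ∧ f x = r := by
  obtain ⟨x₀, hx₀r, hx₀a⟩ := ((hbot.eventually_lt_const hl).and (eventually_lt_atBot a)).exists
  obtain ⟨x₁, hx₁r, hx₁a, hx₀₁⟩ := ((htop.eventually_const_lt hu).and
    (eventually_mem_nhdsWithin.and
      (eventually_nhdsWithin_of_eventually_nhds (eventually_gt_nhds hx₀a)))).exists
  obtain ⟨x, hx, rfl⟩ := intermediate_value_Icc hx₀₁.le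
    (hcont.mono fun _ hy => hy.2.trans_lt hx₁a) ⟨hx₀r.le, hx₁r.le⟩
  have hxa : x < a := hx.2.trans_lt hx₁a
  exact ⟨x, ⟨hxa, rfl⟩, fun y ⟨hya, hy⟩ => hmono.injOn hya hxa hy⟩

theorem intervalIntegral.integral_neg_self_of_even {E : Type*} [NormedAddCommGroup E]
    [NormedSpace ℝ E] {f : ℝ → E} {a : ℝ} (heven : ∀ x, f (-x) = f x)
    (hf : IntervalIntegrable f MeasureTheory.volume 0 a) :
    ∫ x in -a..a, f x = (2 : ℝ) • ∫ x in 0..a, f x := by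
  have hsymm : ∫ x in -a..0, f x = ∫ x in 0..a, f x := by
    simpa [heven] using (integral_comp_neg (a := 0) (b := a) f).symm
  have hf' : IntervalIntegrable f MeasureTheory.volume (-a) 0 := by
    simpa [heven] using ((IntervalIntegrable.iff_comp_neg).1 hf).symm
  rw [← integral_add_adjacent_intervals hf' hf, hsymm, two_smul]

noncomputable def smallRoot (x : ℝ) : ℝ := -x - √(x ^ 2 - 1)

section smallRoot

variable {x : ℝ}

lemma neg_add_sqrt_pos (hx : x ≤ -1) : 0 < -x + √(x ^ 2 - 1) := by
  linarith [sqrt_nonneg (x ^ 2 - 1)]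

lemma smallRoot_eq_inv (hx : x ≤ -1) : smallRoot x = (-x + √(x ^ 2 - 1))⁻¹ := by
  refine eq_inv_of_mul_eq_one_left ?_
  have hsq := sq_sqrt (by nlinarith : (0 : ℝ) ≤ x ^ 2 - 1)
  rw [smallRoot]
  linear_combination -hsq

lemma smallRoot_pos (hx : x ≤ -1) : 0 < smallRoot x := by
  rw [smallRoot_eq_inv hx]
  exact inv_pos.2 (neg_add_sqrt_pos hx)

lemma smallRoot_le_inv_neg (hx : x ≤ -1) : smallRoot x ≤ (-x)⁻¹ := by
  rw [smallRoot_eq_inv hx]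
  exact inv_anti₀ (by linarith) (by linarith [sqrt_nonneg (x ^ 2 - 1)])

lemma smallRoot_strictMonoOn : StrictMonoOn smallRoot (Iic (-1)) := by
  intro x hx y hy hxy
  rw [smallRoot_eq_inv hx, smallRoot_eq_inv hy]
  refine inv_strictAnti₀ (neg_add_sqrt_pos hy) ?_
  have := sqrt_le_sqrt (by nlinarith [mem_Iic.1 hy] : y ^ 2 - 1 ≤ x ^ 2 - 1)
  linarith

end smallRoot

lemma d_eq_smallRoot (φ ν : ℝ) : d φ ν = smallRoot (cos φ + ν / 2) := rfl

lemma cos_add_half_le_neg_one (φ : ℝ) {ν : ℝ} (hν : ν ≤ -4) : cos φ + ν / 2 ≤ -1 := by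
  linarith [cos_le_one φ]

lemma d_strictMonoOn (φ : ℝ) : StrictMonoOn (d φ) (Iic (-4)) := fun _ h₁ _ h₂ h =>
  smallRoot_strictMonoOn (cos_add_half_le_neg_one φ h₁) (cos_add_half_le_neg_one φ h₂)
    (by linarith)

lemma abs_d_le (φ : ℝ) {ν : ℝ} (hν : ν < -4) : |d φ ν| ≤ (-1 - ν / 2)⁻¹ := by
  have hx := cos_add_half_le_neg_one φ hν.le
  rw [d_eq_smallRoot, abs_of_pos (smallRoot_pos hx)]
  exact (smallRoot_le_inv_neg hx).trans (inv_anti₀ (by linarith) (by linarith [cos_le_one φ]))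

lemma continuous_d_mul_sin_sq (ν : ℝ) : Continuous fun φ => d φ ν * sin φ ^ 2 := by
  unfold d; fun_prop

lemma continuous_I : Continuous I :=
  continuous_const.mul <| continuous_parametric_intervalIntegral_of_continuous'
    (f := fun ν φ => d φ ν * sin φ ^ 2) (by unfold d; fun_prop) _ _

lemma I_strictMonoOn : StrictMonoOn I (Iic (-4)) := by
  intro ν₁ h₁ ν₂ h₂ h
  have hd φ : d φ ν₁ < d φ ν₂ := d_strictMonoOn φ h₁ h₂ h
  refine mul_lt_mul_of_pos_left ?_ (by positivity)
  refine integral_lt_integral_of_continuousOn_of_le_of_exists_lt (by linarith [pi_pos])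
    (continuous_d_mul_sin_sq ν₁).continuousOn (continuous_d_mul_sin_sq ν₂).continuousOn
    (fun φ _ => mul_le_mul_of_nonneg_right (hd φ).le (sq_nonneg _))
    ⟨π / 2, ⟨by linarith [pi_pos], by linarith [pi_pos]⟩, by simpa using hd (π / 2)⟩

lemma abs_I_le {ν : ℝ} (hν : ν < -4) : |I ν| ≤ 2 * (-1 - ν / 2)⁻¹ := by
  have hbound : ∀ φ ∈ uIoc (-π) π, ‖d φ ν * sin φ ^ 2‖ ≤ (-1 - ν / 2)⁻¹ := fun φ _ => by
    rw [norm_mul, norm_pow, norm_eq_abs, norm_eq_abs, ← mul_one (-1 - ν / 2)⁻¹]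
    exact mul_le_mul (abs_d_le φ hν) (pow_le_one₀ (abs_nonneg _) (abs_sin_le_one φ))
      (by positivity) (inv_nonneg.2 (by linarith))
  have hint := norm_integral_le_of_norm_le_const hbound
  rw [show |π - -π| = 2 * π by rw [abs_of_pos (by linarith [pi_pos])]; ring] at hint
  rw [I, abs_mul, abs_of_pos (by positivity)]
  calc 1 / π * |∫ φ in -π..π, d φ ν * sin φ ^ 2| ≤ 1 / π * ((-1 - ν / 2)⁻¹ * (2 * π)) :=
        mul_le_mul_of_nonneg_left hint (by positivity)
    _ = 2 * (-1 - ν / 2)⁻¹ := by field_simp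

lemma tendsto_I_atBot : Tendsto I atBot (𝓝 0) := by
  have hlin : Tendsto (fun ν : ℝ => -1 - ν / 2) atBot atTop :=
    tendsto_atTop_add_const_left _ (-1) (tendsto_neg_atBot_atTop.atTop_div_const two_pos)
      |>.congr fun ν => by ring
  refine squeeze_zero_norm' ?_ (by simpa using (tendsto_inv_atTop_zero.comp hlin).const_mul 2)
  filter_upwards [eventually_lt_atBot (-4)] with ν hν using abs_I_le hν

lemma d_neg_four (φ : ℝ) : d φ (-4) = 2 - cos φ - √((1 - cos φ) * (3 - cos φ)) := by
  rw [d]; ring_nf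

lemma sqrt_mul_sin_eq {φ : ℝ} (hs : 0 ≤ sin φ) :
    √((1 - cos φ) * (3 - cos φ)) * sin φ = (1 - cos φ) * √((1 + cos φ) * (3 - cos φ)) := by
  have hc : 0 ≤ 1 - cos φ := by linarith [cos_le_one φ]
  calc √((1 - cos φ) * (3 - cos φ)) * sin φ = √((1 - cos φ) * (3 - cos φ) * sin φ ^ 2) := by
        rw [sqrt_mul' _ (sq_nonneg _), sqrt_sq hs]
    _ = √((1 - cos φ) ^ 2 * ((1 + cos φ) * (3 - cos φ))) := by
        congr 1; linear_combination ((1 - cos φ) * (3 - cos φ)) * sin_sq φ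
    _ = (1 - cos φ) * √((1 + cos φ) * (3 - cos φ)) := by rw [sqrt_mul (sq_nonneg _), sqrt_sq hc]

lemma hasDerivAt_primitive_sqrt_mul_sin_sq {φ : ℝ} (hφ : φ ∈ Ioo 0 π) :
    HasDerivAt (fun φ => -(1 / 3) * ((1 + cos φ) * (3 - cos φ) * √((1 + cos φ) * (3 - cos φ))))
      (√((1 - cos φ) * (3 - cos φ)) * sin φ ^ 2) φ := by
  have hs := sin_pos_of_pos_of_lt_pi hφ.1 hφ.2
  have hpos : 0 < (1 + cos φ) * (3 - cos φ) := by
    nlinarith [sin_sq_add_cos_sq φ, cos_le_one φ]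
  have hu : HasDerivAt (fun φ => (1 + cos φ) * (3 - cos φ)) (-2 * sin φ * (1 - cos φ)) φ := by
    have := ((hasDerivAt_cos φ).const_add 1).mul ((hasDerivAt_cos φ).const_sub 3)
    exact this.congr_deriv (by ring)
  refine ((hu.mul (hu.sqrt hpos.ne')).const_mul (-(1 / 3))).congr_deriv ?_
  rw [sq, ← mul_assoc, sqrt_mul_sin_eq hs.le]
  have hsqrt := sqrt_pos.2 hpos
  set r := √((1 + cos φ) * (3 - cos φ))
  rw [← sq_sqrt hpos.le]
  field_simp
  ring

lemma integral_sqrt_mul_sin_sq :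
    ∫ φ in 0..π, √((1 - cos φ) * (3 - cos φ)) * sin φ ^ 2 = 8 / 3 := by
  rw [integral_eq_sub_of_hasDerivAt_of_le pi_pos.le (by fun_prop)
    (fun _ hφ => hasDerivAt_primitive_sqrt_mul_sin_sq hφ)
    (Continuous.intervalIntegrable (by fun_prop) _ _)]
  have h4 : √4 = 2 := by rw [show (4 : ℝ) = 2 ^ 2 by norm_num, sqrt_sq zero_le_two]
  norm_num [h4]

lemma I_neg_four : I (-4) = 2 * (1 - 8 / (3 * π)) := by
  have heven φ : d (-φ) (-4) * sin (-φ) ^ 2 = d φ (-4) * sin φ ^ 2 := by simp [d]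
  have hsplit : (fun φ => d φ (-4) * sin φ ^ 2) = fun φ =>
      (2 * sin φ ^ 2 - sin φ ^ 2 * cos φ) - √((1 - cos φ) * (3 - cos φ)) * sin φ ^ 2 := by
    funext φ; rw [d_neg_four]; ring
  rw [I, integral_neg_self_of_even heven ((continuous_d_mul_sin_sq _).intervalIntegrable _ _),
    hsplit, integral_sub (Continuous.intervalIntegrable (by fun_prop) _ _)
      (Continuous.intervalIntegrable (by fun_prop) _ _),
    integral_sub (Continuous.intervalIntegrable (by fun_prop) _ _)
      (Continuous.intervalIntegrable (by fun_prop) _ _), integral_const_mul, integral_sin_sq,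
    integral_sin_sq_mul_cos, integral_sqrt_mul_sin_sq]
  simp only [sin_zero, sin_pi, smul_eq_mul]
  field_simp
  ring

theorem I_properties :
    StrictMonoOn I (Set.Iio (-4 : ℝ)) ∧
    Filter.Tendsto I Filter.atBot (nhds 0) ∧
    Filter.Tendsto I (nhdsWithin (-4) (Set.Iio (-4 : ℝ)))
      (nhds (2 * (1 - 8/(3*Real.pi)))) ∧
    ∀ r : ℝ, 0 < r → r < 2 * (1 - 8/(3*Real.pi)) →
      ∃! ν : ℝ, ν < -4 ∧ I ν = r := by
  have hmono : StrictMonoOn I (Iio (-4)) := I_strictMonoOn.mono Iio_subset_Iic_self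
  have hleft : Tendsto I (𝓝[<] (-4)) (𝓝 (2 * (1 - 8 / (3 * π)))) :=
    I_neg_four ▸ continuous_I.continuousAt.continuousWithinAt
  exact ⟨hmono, tendsto_I_atBot, hleft, fun r h₀ h₁ =>
    hmono.existsUnique_eq_of_tendsto continuous_I.continuousOn tendsto_I_atBot hleft h₀ h₁⟩
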